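/- (Strategy Correspondence, part i) Let G be a MAGIIAN, G^K its MKBSC expansion, R an observable reachability objective in G with translation R^K in G^K. Let {α^K_i}_{i∈Agt} be a profile of observation-based memoryless strategies in G^K, and {A_i(α^K_i)}_{i∈Agt} the corresponding profile of induced transducers for G. If {A_i(α^K_i)}_{i∈Agt} is winning for R in G and G^K fulfills the PDK condition, then {α^K_i}_{i∈Agt} is winning for R^K in G^K. -/
import Mathlib


open Set

/-- A multi-agent game with imperfect information against Nature (MAGIIAN).
`obs i l` is the observation block of agent `i` containing location `l`;
the axioms make the blocks of each agent a partition of the locations. -/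
structure MAGIIAN (Agt Loc : Type) (Act : Agt → Type) where
  init : Loc
  trans : Loc → (∀ i, Act i) → Loc → Prop
  obs : Agt → Loc → Set Loc
  obs_mem : ∀ i l, l ∈ obs i l
  obs_eq : ∀ i l l', l' ∈ obs i l → obs i l' = obs i l

namespace MAGIIAN

variable {Agt Loc : Type} {Act : Agt → Type}

/-- `o` is an observation (block) of agent `i` in `G`. -/
def IsObs (G : MAGIIAN Agt Loc Act) (i : Agt) (o : Set Loc) : Prop :=
  ∃ l, o = G.obs i l

/-- Transition relation `Δ_i` of the projection `G|_i`. -/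
def projTrans (G : MAGIIAN Agt Loc Act) (i : Agt) (l : Loc) (a : Act i) (l' : Loc) : Prop :=
  ∃ σ : ∀ j, Act j, σ i = a ∧ G.trans l σ l'

/-- Transition relation `Δ^K_i` of the individual KBSC expansion `(G|_i)^K`. -/
def kTrans (G : MAGIIAN Agt Loc Act) (i : Agt) (s : Set Loc) (a : Act i) (s' : Set Loc) : Prop :=
  ∃ o : Set Loc, G.IsObs i o ∧ s' = {l' ∈ o | ∃ l ∈ s, G.projTrans i l a l'} ∧ s'.Nonempty

/-- Pruned joint transition relation `Δ^K` of the MKBSC expansion `G^K`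
(unrealisable transitions are removed). -/
def kTransJ (G : MAGIIAN Agt Loc Act) (s : Agt → Set Loc) (σ : ∀ i, Act i)
    (s' : Agt → Set Loc) : Prop :=
  (∀ i, G.kTrans i (s i) (σ i) (s' i)) ∧
    ∃ l ∈ (⋂ i, s i), ∃ l' ∈ (⋂ i, s' i), G.trans l σ l'

/-- The MKBSC expansion `G^K`, as a MAGIIAN over joint knowledge states;
agent `i`'s observation of a joint knowledge state is determined by its `i`-th component. -/
def expand (G : MAGIIAN Agt Loc Act) : MAGIIAN Agt (Agt → Set Loc) Act where
  init := fun _ => {G.init}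
  trans := G.kTransJ
  obs := fun i s => {s' | s' i = s i}
  obs_mem := fun _ _ => rfl
  obs_eq := by
    intro i s s' h
    simp only [Set.mem_setOf_eq] at h
    ext t
    simp [Set.mem_setOf_eq, h]

/-- Reachability from the initial location. -/
def Reachable (G : MAGIIAN Agt Loc Act) (l : Loc) : Prop :=
  Relation.ReflTransGen (fun x y => ∃ σ, G.trans x σ y) G.init l

/-- The MKBSC expansion `G^K` fulfills the perfect-distributed-knowledge (PDK) condition:
every reachable joint knowledge state has singleton component intersection. -/
def PDK (G : MAGIIAN Agt Loc Act) : Prop :=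
  ∀ s : Agt → Set Loc, G.expand.Reachable s → ∃ l : Loc, (⋂ i, s i) = {l}

/-- A full play, given as its sequences of locations and of joint actions. -/
def IsPlay (G : MAGIIAN Agt Loc Act) (l : ℕ → Loc) (σ : ℕ → ∀ i, Act i) : Prop :=
  l 0 = G.init ∧ ∀ k, G.trans (l k) (σ k) (l (k + 1))

/-- Observation history of agent `i` (list of observation blocks) up to time `k`. -/
def obsHist (G : MAGIIAN Agt Loc Act) (i : Agt) (l : ℕ → Loc) (k : ℕ) : List (Set Loc) :=
  (List.range (k + 1)).map fun j => G.obs i (l j)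

/-- Outcomes (location sequences) of a profile of observation-based
perfect-recall strategies. -/
def PROutcome (G : MAGIIAN Agt Loc Act) (α : ∀ i, List (Set Loc) → Act i)
    (l : ℕ → Loc) : Prop :=
  ∃ σ : ℕ → ∀ i, Act i, G.IsPlay l σ ∧ ∀ k i, σ k i = α i (G.obsHist i l k)

/-- Outcomes of a profile of observation-based memoryless strategies. -/
def MLOutcome (G : MAGIIAN Agt Loc Act) (α : ∀ i, Set Loc → Act i) (l : ℕ → Loc) : Prop :=
  ∃ σ : ℕ → ∀ i, Act i, G.IsPlay l σ ∧ ∀ k i, σ k i = α i (G.obs i (l k))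

/-- A play is winning for an observable reachability objective `R` iff some
agent at some point observes an observation in `R`. -/
def WinsReach (G : MAGIIAN Agt Loc Act) (R : Set (Set Loc)) (l : ℕ → Loc) : Prop :=
  ∃ i k, G.obs i (l k) ∈ R

/-- A play is winning for an observable safety objective `F` iff at every point
some agent observes an observation in `F`. -/
def WinsSafe (G : MAGIIAN Agt Loc Act) (F : Set (Set Loc)) (l : ℕ → Loc) : Prop :=
  ∀ k, ∃ i, G.obs i (l k) ∈ F

/-- `ob_i`: maps an observation block of `G^K` for agent `i` (all of whose members have the
same `i`-th component `A`) to the unique observation of `i` in `G` that includes `A`. -/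
def obMap (G : MAGIIAN Agt Loc Act) (i : Agt) (O : Set (Agt → Set Loc)) : Set Loc :=
  ⋃ s ∈ O, ⋃ l ∈ s i, G.obs i l

/-- The translated objective `R^K = {s ∈ S : ∃ i, ∃ o ∈ R ∩ Obs_i, s i ⊆ o}`,
as a set of joint knowledge states. -/
def transObj (G : MAGIIAN Agt Loc Act) (R : Set (Set Loc)) : Set (Agt → Set Loc) :=
  {s | ∃ i, ∃ o ∈ R, G.IsObs i o ∧ s i ⊆ o}

end MAGIIAN


namespace MAGIIAN

variable {Agt Loc : Type} {Act : Agt → Type}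

/-- Outcomes in `G^K` of a profile of observation-based memoryless strategies,
each agent's action depending only on the `i`-th component (its knowledge state)
of the current joint knowledge state. -/
def KMLOutcome (G : MAGIIAN Agt Loc Act) (α : ∀ i, Set Loc → Act i)
    (s : ℕ → Agt → Set Loc) : Prop :=
  ∃ σ : ℕ → ∀ i, Act i, s 0 = (fun _ => {G.init}) ∧
    (∀ k, G.kTransJ (s k) (σ k) (s (k + 1))) ∧
    (∀ k i, σ k i = α i (s k i))

/-- Outcomes in `G` of the profile of induced transducers `{A_i(α^K_i)}`:
each agent `i` starts with memory state `{l_init}`, plays `α i` on its current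
memory state `s`, and updates its memory to the unique `Δ^K_i`-successor `s'` of `s`
contained in its new observation. -/
def TransducerOutcome (G : MAGIIAN Agt Loc Act) (α : ∀ i, Set Loc → Act i)
    (l : ℕ → Loc) : Prop :=
  l 0 = G.init ∧ ∃ σ : ℕ → ∀ i, Act i, ∃ mem : Agt → ℕ → Set Loc,
    (∀ i, mem i 0 = {G.init}) ∧
    (∀ k, G.trans (l k) (σ k) (l (k + 1))) ∧
    (∀ k i, σ k i = α i (mem i k)) ∧
    (∀ k i, G.kTrans i (mem i k) (σ k i) (mem i (k + 1)) ∧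
      mem i (k + 1) ⊆ G.obs i (l (k + 1)))

/-- Strategy Correspondence, part (i): if the profile of induced transducers
`{A_i(α^K_i)}` is winning for `R` in `G` and `G^K` fulfills the PDK condition,
then `{α^K_i}` is winning for `R^K` in `G^K`. -/
theorem strategy_correspondence_i (G : MAGIIAN Agt Loc Act)
    (R : Set (Set Loc)) (hR : ∀ o ∈ R, ∃ i, G.IsObs i o)
    (α : ∀ i, Set Loc → Act i)
    (hwin : ∀ l, G.TransducerOutcome α l → G.WinsReach R l)
    (hPDK : G.PDK) :
    ∀ s : ℕ → Agt → Set Loc, G.KMLOutcome α s → ∃ k, s k ∈ G.transObj R := by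
  rintro s ⟨σ, hs0, hstep, hact⟩
  -- every s k is reachable in G^K
  have hreach : ∀ k, G.expand.Reachable (s k) := by
    intro k
    induction k with
    | zero =>
      rw [show s 0 = G.expand.init from hs0]
      exact Relation.ReflTransGen.refl
    | succ k ih =>
      exact Relation.ReflTransGen.tail ih ⟨σ k, hstep k⟩
  -- choose the singleton intersection points
  choose m hm using fun k => hPDK (s k) (hreach k)
  have hmem : ∀ k i, m k ∈ s k i := by
    intro k i
    have : m k ∈ ⋂ j, s k j := by rw [hm k]; exact rfl
    exact Set.mem_iInter.mp this i
  -- m 0 = init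
  have hm0 : m 0 = G.init := by
    have hi : G.init ∈ ⋂ j, s 0 j := by
      apply Set.mem_iInter.mpr
      intro j
      rw [congrFun hs0 j]
      exact rfl
    rw [hm 0] at hi
    exact hi.symm
  -- transitions between the m k
  have htrans : ∀ k, G.trans (m k) (σ k) (m (k + 1)) := by
    intro k
    obtain ⟨-, l, hl, l', hl', ht⟩ := hstep k
    rw [hm k] at hl
    rw [hm (k + 1)] at hl'
    rw [Set.mem_singleton_iff] at hl hl'
    rwa [hl, hl'] at ht
  -- each component kTrans
  have hkT : ∀ k i, G.kTrans i (s k i) (σ k i) (s (k + 1) i) := fun k => (hstep k).1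
  -- s k i ⊆ obs i (m k)
  have hsub : ∀ k i, s k i ⊆ G.obs i (m k) := by
    intro k i
    cases k with
    | zero =>
      intro x hx
      rw [congrFun hs0 i] at hx
      rw [Set.mem_singleton_iff] at hx
      rw [hx, hm0]
      exact G.obs_mem i G.init
    | succ k =>
      obtain ⟨o, ⟨lw, ho⟩, heq, -⟩ := hkT k i
      have hsubo : s (k + 1) i ⊆ o := by
        rw [heq]; intro x hx; exact hx.1
      have hmo : m (k + 1) ∈ o := hsubo (hmem (k + 1) i)
      have : G.obs i (m (k + 1)) = o := by
        rw [ho] at hmo ⊢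
        exact G.obs_eq i lw (m (k + 1)) hmo
      rw [this]
      exact hsubo
  -- m is a transducer outcome
  have hTO : G.TransducerOutcome α m := by
    refine ⟨hm0, σ, fun i k => s k i, fun i => congrFun hs0 i, htrans, fun k i => hact k i,
      fun k i => ⟨hkT k i, hsub (k + 1) i⟩⟩
  obtain ⟨i, k, hwk⟩ := hwin m hTO
  exact ⟨k, ⟨i, G.obs i (m k), hwk, ⟨m k, rfl⟩, hsub k i⟩⟩

end MAGIIAN
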